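/- Let A be a real symmetric positive definite n×n matrix and B a real symmetric n×n matrix, and assume the residual propagation matrix S := I − A·B is symmetric with eigenvalues λ₁ ≥ λ₂ ≥ ⋯ ≥ λ_N (counted with multiplicity) satisfying 1 > λ₁ =: ρ_err and λ_N > 0. Let u ∈ ℝⁿ solve A·u = f, define the iteration u^{(k+1)} = u^{(k)} + B·(f − A·u^{(k)}), set r_k := f − A·u^{(k)}, and assume the orthogonal projection of r₀ onto the eigenspace of S for λ₁ is nonzero. Define ρ_err^{(k)} := ‖r_k‖₂/‖r_{k−1}‖₂ and the algebraic error estimator η_a^{(k+1)} := e^{1/k} · (ρ_err^{(k)}/(1 − ρ_err^{(k)})) · ‖u^{(k+1)} − u^{(k)}‖_A for k ≥ 1. Then there exists N ∈ ℕ such that for all k ≥ N, ‖u − u^{(k+1)}‖_A ≤ η_a^{(k+1)}. -/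

import Mathlib

open Matrix

/-- The `A`-norm of a vector `v`: `‖v‖_A = √(A·v ⋅ v)`. -/
noncomputable def ANorm {n : ℕ} (A : Matrix (Fin n) (Fin n) ℝ) (v : Fin n → ℝ) : ℝ :=
  Real.sqrt (A.mulVec v ⬝ᵥ v)

/-- The Euclidean norm of a vector `v`: `‖v‖₂ = √(v ⋅ v)`. -/
noncomputable def euclNorm {n : ℕ} (v : Fin n → ℝ) : ℝ :=
  Real.sqrt (v ⬝ᵥ v)

/-!
Write `ρ = ρ_err` and `e_k = u - u^{(k)}`, so that `e_{k+1} = (I - BA) e_k` and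
`u^{(k+1)} - u^{(k)} = BA e_k`. Conjugating by `Q = A^{1/2}` turns `I - BA` into the symmetric
matrix `I - QBQ`, which has the spectrum of `S = I - AB`; since `λ ≤ ρ/(1-ρ) · (1-λ)` for
`λ ∈ [0, ρ]`, the `A`-norm of the error is at most `ρ/(1-ρ)` times that of the increment.

It remains to compare `ρ` with the observed ratio `ρ_err^{(k)}`. Expanding `r_k = S^k r_0` in an
eigenbasis of `S`, the components outside the `ρ`-eigenspace decay geometrically relative to the
nonzero `ρ`-component, so `ρ_err^{(k)} → ρ` geometrically fast, and the resulting loss in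
`ρ/(1-ρ)` is eventually absorbed by the factor `e^{1/k} ≥ 1 + 1/k`.
-/

open Filter Topology

section OrthonormalExpansion

variable {ι : Type*} [Fintype ι]

lemma OrthonormalBasis.dotProduct_eq_sum (b : OrthonormalBasis ι ℝ (EuclideanSpace ℝ ι))
    (x y : ι → ℝ) : x ⬝ᵥ y = ∑ i, (⇑(b i) ⬝ᵥ x) * (⇑(b i) ⬝ᵥ y) := by
  simpa [EuclideanSpace.inner_eq_star_dotProduct, dotProduct_comm] using
    (b.sum_inner_mul_inner (WithLp.toLp 2 x) (WithLp.toLp 2 y)).symm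

variable [DecidableEq ι] {M : Matrix ι ι ℝ}

lemma Matrix.IsHermitian.eigenvectorBasis_dotProduct_mulVec (hM : M.IsHermitian) (i : ι)
    (x : ι → ℝ) :
    ⇑(hM.eigenvectorBasis i) ⬝ᵥ (M *ᵥ x) = hM.eigenvalues i * (⇑(hM.eigenvectorBasis i) ⬝ᵥ x) := by
  rw [dotProduct_mulVec, ← mulVec_transpose, (isHermitian_iff_isSymm.mp hM).eq,
    hM.mulVec_eigenvectorBasis, smul_dotProduct, smul_eq_mul]

lemma Matrix.IsHermitian.exists_eigenvalues_eq_and_dotProduct_ne_zero (hM : M.IsHermitian)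
    {ρ : ℝ} {v x : ι → ℝ} (hv : v ∈ Module.End.eigenspace (toLin' M) ρ) (hvx : v ⬝ᵥ x ≠ 0) :
    ∃ i, hM.eigenvalues i = ρ ∧ ⇑(hM.eigenvectorBasis i) ⬝ᵥ x ≠ 0 := by
  rw [hM.eigenvectorBasis.dotProduct_eq_sum] at hvx
  obtain ⟨i, -, hi⟩ := Finset.exists_ne_zero_of_sum_ne_zero hvx
  obtain ⟨hiv, hix⟩ := mul_ne_zero_iff.mp hi
  refine ⟨i, mul_right_cancel₀ hiv ?_, hix⟩
  rw [← hM.eigenvectorBasis_dotProduct_mulVec, ← toLin'_apply, Module.End.mem_eigenspace_iff.mp hv,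
    dotProduct_smul, smul_eq_mul]

end OrthonormalExpansion

lemma Matrix.spectrum_one_sub_mul_comm {K n : Type*} [Field K] [Fintype n] [DecidableEq n]
    (X Y : Matrix n n K) : spectrum K (1 - X * Y) = spectrum K (1 - Y * X) := by
  have hXY : spectrum K (X * Y) = spectrum K (Y * X) := by
    ext μ
    simp only [mem_spectrum_iff_isRoot_charpoly, charpoly_mul_comm]
  rw [← map_one (algebraMap K (Matrix n n K)), ← spectrum.singleton_sub_eq,
    ← spectrum.singleton_sub_eq, hXY]

lemma euclNorm_nonneg {n : ℕ} (v : Fin n → ℝ) : 0 ≤ euclNorm v :=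
  Real.sqrt_nonneg _

lemma Matrix.IsHermitian.euclNorm_mulVec_le_mul_one_sub_mulVec {n : ℕ}
    {M : Matrix (Fin n) (Fin n) ℝ} (hM : M.IsHermitian) {ρ : ℝ} (hρ0 : 0 ≤ ρ) (hρ : ρ < 1)
    (hspec : ∀ μ ∈ spectrum ℝ M, 0 ≤ μ ∧ μ ≤ ρ) (x : Fin n → ℝ) :
    euclNorm (M *ᵥ x) ≤ ρ / (1 - ρ) * euclNorm ((1 - M) *ᵥ x) := by
  set b := hM.eigenvectorBasis
  set ε := hM.eigenvalues
  set c := ρ / (1 - ρ)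
  have hc : 0 ≤ c := div_nonneg hρ0 (by linarith)
  have hterm : ∀ i, (ε i * (⇑(b i) ⬝ᵥ x)) ^ 2 ≤ (c * ((1 - ε i) * (⇑(b i) ⬝ᵥ x))) ^ 2 := by
    intro i
    obtain ⟨hε0, hερ⟩ := hspec _ (hM.eigenvalues_mem_spectrum_real i)
    -- `μ ↦ μ / (1 - μ)` is increasing on `[0, 1)`
    have hεc : ε i ≤ c * (1 - ε i) := by
      rw [div_mul_eq_mul_div, le_div_iff₀ (by linarith)]
      nlinarith
    rw [← mul_assoc, mul_pow, mul_pow (c * _)]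
    exact mul_le_mul_of_nonneg_right (pow_le_pow_left₀ hε0 hεc 2) (sq_nonneg _)
  have hsub : ∀ i, ⇑(b i) ⬝ᵥ ((1 - M) *ᵥ x) = (1 - ε i) * (⇑(b i) ⬝ᵥ x) := fun i => by
    rw [sub_mulVec, one_mulVec, dotProduct_sub, hM.eigenvectorBasis_dotProduct_mulVec]
    ring
  calc euclNorm (M *ᵥ x)
      = Real.sqrt (∑ i, (ε i * (⇑(b i) ⬝ᵥ x)) ^ 2) := by
        simp only [euclNorm, b.dotProduct_eq_sum (M *ᵥ x), ← sq,
          hM.eigenvectorBasis_dotProduct_mulVec, ε, b]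
    _ ≤ Real.sqrt (∑ i, (c * ((1 - ε i) * (⇑(b i) ⬝ᵥ x))) ^ 2) :=
        Real.sqrt_le_sqrt (Finset.sum_le_sum fun i _ => hterm i)
    _ = c * euclNorm ((1 - M) *ᵥ x) := by
        simp only [euclNorm, b.dotProduct_eq_sum ((1 - M) *ᵥ x), ← sq, hsub, mul_pow,
          ← Finset.mul_sum, Real.sqrt_mul (sq_nonneg c), Real.sqrt_sq hc]

lemma ANorm_eq_euclNorm_mulVec {n : ℕ} {A Q : Matrix (Fin n) (Fin n) ℝ} (hQ : Q.IsSymm)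
    (hQA : Q * Q = A) (v : Fin n → ℝ) : ANorm A v = euclNorm (Q *ᵥ v) := by
  rw [ANorm, euclNorm, ← hQA, ← mulVec_mulVec, dotProduct_comm, dotProduct_mulVec,
    ← mulVec_transpose, hQ.eq]

open scoped MatrixOrder in
theorem ANorm_one_sub_mul_mulVec_le {n : ℕ} {A B : Matrix (Fin n) (Fin n) ℝ}
    (hA : A.PosSemidef) (hB : B.IsSymm) {ρ : ℝ} (hρ0 : 0 ≤ ρ) (hρ : ρ < 1)
    (hspec : ∀ μ ∈ spectrum ℝ (1 - A * B), 0 ≤ μ ∧ μ ≤ ρ) (e : Fin n → ℝ) :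
    ANorm A ((1 - B * A) *ᵥ e) ≤ ρ / (1 - ρ) * ANorm A ((B * A) *ᵥ e) := by
  set Q := CFC.sqrt A
  have hQA : Q * Q = A := CFC.sqrt_mul_sqrt_self A hA.nonneg
  have hQ : Q.IsSymm := isHermitian_iff_isSymm.mp (CFC.sqrt_nonneg A).posSemidef.isHermitian
  set M := 1 - Q * B * Q
  have hM : M.IsHermitian := by
    rw [isHermitian_iff_isSymm]
    simp only [M, IsSymm, transpose_sub, transpose_one, transpose_mul, hQ.eq, hB.eq, mul_assoc]
  have hspecM : spectrum ℝ M = spectrum ℝ (1 - A * B) := by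
    rw [← hQA, mul_assoc, spectrum_one_sub_mul_comm Q (Q * B)]
  have hQerr : Q *ᵥ ((1 - B * A) *ᵥ e) = M *ᵥ (Q *ᵥ e) := by
    simp only [mulVec_mulVec, M, ← hQA]
    noncomm_ring
  have hQinc : Q *ᵥ ((B * A) *ᵥ e) = (1 - M) *ᵥ (Q *ᵥ e) := by
    simp only [mulVec_mulVec, M, ← hQA]
    noncomm_ring
  rw [ANorm_eq_euclNorm_mulVec hQ hQA, ANorm_eq_euclNorm_mulVec hQ hQA, hQerr, hQinc]
  exact hM.euclNorm_mulVec_le_mul_one_sub_mulVec hρ0 hρ (hspecM ▸ hspec) _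

section Iteration

variable {R ι : Type*} [CommRing R] [Fintype ι] {A B : Matrix ι ι R} {f u : ι → R}
  {uk : ℕ → ι → R}

lemma residual_succ_eq [DecidableEq ι] (hiter : ∀ k, uk (k + 1) = uk k + B *ᵥ (f - A *ᵥ uk k))
    (k : ℕ) : f - A *ᵥ uk (k + 1) = (1 - A * B) *ᵥ (f - A *ᵥ uk k) := by
  rw [hiter k, mulVec_add, mulVec_mulVec, sub_mulVec, one_mulVec]
  abel

lemma error_succ_eq [DecidableEq ι] (hu : A *ᵥ u = f)
    (hiter : ∀ k, uk (k + 1) = uk k + B *ᵥ (f - A *ᵥ uk k)) (k : ℕ) :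
    u - uk (k + 1) = (1 - B * A) *ᵥ (u - uk k) := by
  rw [hiter k, ← hu, ← mulVec_sub, mulVec_mulVec, sub_mulVec, one_mulVec]
  abel

lemma increment_eq (hu : A *ᵥ u = f) (hiter : ∀ k, uk (k + 1) = uk k + B *ᵥ (f - A *ᵥ uk k))
    (k : ℕ) : uk (k + 1) - uk k = (B * A) *ᵥ (u - uk k) := by
  rw [hiter k, ← hu, ← mulVec_sub, mulVec_mulVec, add_sub_cancel_left]

end Iteration

lemma tendsto_succ_mul_pow_atTop_nhds_zero {x : ℝ} (hx0 : 0 ≤ x) (hx1 : x < 1) :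
    Tendsto (fun k : ℕ => ((k : ℝ) + 1) * x ^ k) atTop (𝓝 0) := by
  simpa [add_mul] using (tendsto_self_mul_const_pow_of_lt_one hx0 hx1).add
    (tendsto_pow_atTop_nhds_zero_of_lt_one hx0 hx1)

section PowerSums

variable {ι : Type*} {ε c : ι → ℝ} {ρ : ℝ}

lemma tendsto_succ_mul_sum_sq_pow_div_pow {s : Finset ι} (hρ : 0 < ρ)
    (hε : ∀ i ∈ s, 0 ≤ ε i ∧ ε i < ρ) :
    Tendsto (fun k : ℕ => ((k : ℝ) + 1) * (∑ i ∈ s, (ε i ^ k * c i) ^ 2) / (ρ ^ k) ^ 2)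
      atTop (𝓝 0) := by
  have hterm : ∀ k : ℕ, ((k : ℝ) + 1) * (∑ i ∈ s, (ε i ^ k * c i) ^ 2) / (ρ ^ k) ^ 2
      = ∑ i ∈ s, ((k : ℝ) + 1) * ((ε i / ρ) ^ 2) ^ k * c i ^ 2 := fun k => by
    rw [mul_div_assoc, Finset.sum_div, Finset.mul_sum]
    refine Finset.sum_congr rfl fun i _ => ?_
    rw [div_pow, div_pow]
    field_simp
    ring
  simp_rw [hterm]
  rw [← Finset.sum_const_zero (s := s)]
  refine tendsto_finsetSum _ fun i hi => ?_
  have hq : (ε i / ρ) ^ 2 < 1 := by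
    rw [div_pow, div_lt_one (by positivity)]
    exact pow_lt_pow_left₀ (hε i hi).2 (hε i hi).1 two_ne_zero
  simpa using (tendsto_succ_mul_pow_atTop_nhds_zero (sq_nonneg _) hq).mul_const (c i ^ 2)

variable [Fintype ι]

lemma sum_sq_pow_mul_pos (hρ : 0 < ρ) (h : ∃ i, ε i = ρ ∧ c i ≠ 0) (k : ℕ) :
    0 < ∑ i, (ε i ^ k * c i) ^ 2 := by
  obtain ⟨i, hiρ, hci⟩ := h
  refine Finset.sum_pos' (fun j _ => sq_nonneg _) ⟨i, Finset.mem_univ i, ?_⟩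
  rw [hiρ]
  positivity

lemma sum_sq_pow_succ_mul_le (hε : ∀ i, 0 ≤ ε i ∧ ε i ≤ ρ) (k : ℕ) :
    ∑ i, (ε i ^ (k + 1) * c i) ^ 2 ≤ ρ ^ 2 * ∑ i, (ε i ^ k * c i) ^ 2 := by
  rw [Finset.mul_sum]
  refine Finset.sum_le_sum fun i _ => ?_
  rw [show (ε i ^ (k + 1) * c i) ^ 2 = ε i ^ 2 * (ε i ^ k * c i) ^ 2 by ring]
  exact mul_le_mul_of_nonneg_right (pow_le_pow_left₀ (hε i).1 (hε i).2 2) (sq_nonneg _)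

lemma eventually_mul_sum_sq_pow_le_sum_sq_pow_succ (hρ : 0 < ρ) (hε : ∀ i, 0 ≤ ε i ∧ ε i ≤ ρ)
    (h : ∃ i, ε i = ρ ∧ c i ≠ 0) {C : ℝ} (hC : 0 < C) :
    ∀ᶠ k : ℕ in atTop,
      ρ ^ 2 * (1 - C / (k + 1)) * ∑ i, (ε i ^ k * c i) ^ 2 ≤ ∑ i, (ε i ^ (k + 1) * c i) ^ 2 := by
  classical
  set T := Finset.univ.filter fun i => ε i = ρ
  set P := ∑ i ∈ T, c i ^ 2
  set D : ℕ → ℝ := fun k => ∑ i ∈ Tᶜ, (ε i ^ k * c i) ^ 2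
  have hP : 0 < P := by
    obtain ⟨i, hiρ, hci⟩ := h
    exact Finset.sum_pos' (fun j _ => sq_nonneg _)
      ⟨i, Finset.mem_filter.mpr ⟨Finset.mem_univ i, hiρ⟩, by positivity⟩
  have hD : ∀ k, 0 ≤ D k := fun k => Finset.sum_nonneg fun i _ => sq_nonneg _
  have hsplit : ∀ k, ∑ i, (ε i ^ k * c i) ^ 2 = (ρ ^ k) ^ 2 * P + D k := by
    intro k
    rw [← Finset.sum_add_sum_compl T, Finset.mul_sum]
    congr 1
    exact Finset.sum_congr rfl fun i hi => by rw [(Finset.mem_filter.mp hi).2]; ring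
  have hlim : Tendsto (fun k : ℕ => ((k : ℝ) + 1) * D k / (ρ ^ k) ^ 2) atTop (𝓝 0) := by
    refine tendsto_succ_mul_sum_sq_pow_div_pow hρ fun i hi => ⟨(hε i).1, ?_⟩
    exact lt_of_le_of_ne (hε i).2 (by simpa [T] using hi)
  filter_upwards [hlim.eventually_le_const (mul_pos hC hP)] with k hk
  have hDk : D k ≤ C / (k + 1) * ∑ i, (ε i ^ k * c i) ^ 2 := by
    calc D k ≤ C / (k + 1) * ((ρ ^ k) ^ 2 * P) := by
          rw [div_le_iff₀ (by positivity)] at hk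
          rw [div_mul_eq_mul_div, le_div_iff₀ (by positivity)]
          linarith
      _ ≤ C / (k + 1) * ∑ i, (ε i ^ k * c i) ^ 2 := by
          rw [hsplit k]
          gcongr
          linarith [hD k]
  calc ρ ^ 2 * (1 - C / (k + 1)) * ∑ i, (ε i ^ k * c i) ^ 2
      ≤ ρ ^ 2 * (∑ i, (ε i ^ k * c i) ^ 2 - D k) := by nlinarith [sq_nonneg ρ]
    _ = (ρ ^ (k + 1)) ^ 2 * P := by rw [hsplit k]; ring
    _ ≤ ∑ i, (ε i ^ (k + 1) * c i) ^ 2 := by rw [hsplit (k + 1)]; linarith [hD (k + 1)]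

end PowerSums

lemma div_one_sub_le_one_add_mul_div_one_sub {ρ t κ : ℝ} (ht0 : 0 ≤ t) (htρ : t ≤ ρ) (hρ : ρ < 1)
    (hκ0 : 0 ≤ κ) (hκ1 : κ ≤ 1) (hlow : ρ ^ 2 * (1 - (1 - ρ) / 2 * κ) ≤ t ^ 2) :
    ρ / (1 - ρ) ≤ (1 + κ) * (t / (1 - t)) := by
  set a := (1 - ρ) * κ
  have ha0 : 0 ≤ a := mul_nonneg (by linarith) hκ0
  have ha1 : a ≤ 1 := by nlinarith
  have ht : ρ * (1 - a / 2) ≤ t := by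
    refine (pow_le_pow_iff_left₀ (by nlinarith) ht0 two_ne_zero).mp ?_
    calc (ρ * (1 - a / 2)) ^ 2 ≤ ρ ^ 2 * (1 - a / 2) := by
          rw [mul_pow]
          exact mul_le_mul_of_nonneg_left (by nlinarith) (sq_nonneg ρ)
      _ ≤ t ^ 2 := by convert hlow using 3; ring
  rw [mul_div_assoc', div_le_div_iff₀ (by linarith) (by linarith)]
  nlinarith [mul_le_mul_of_nonneg_right ht (by linarith : 0 ≤ 1 + a),
    mul_nonneg (mul_nonneg (ht0.trans htρ) ha0) (by linarith : 0 ≤ 1 - a)]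

theorem Matrix.IsHermitian.eventually_div_one_sub_le_exp_mul_ratio {n : ℕ}
    {S : Matrix (Fin n) (Fin n) ℝ} (hS : S.IsHermitian) {ρ : ℝ} (hρ0 : 0 < ρ) (hρ : ρ < 1)
    (hspec : ∀ μ ∈ spectrum ℝ S, 0 ≤ μ ∧ μ ≤ ρ) {r : ℕ → Fin n → ℝ}
    (hr : ∀ k, r (k + 1) = S *ᵥ r k)
    (hproj : ∃ v ∈ Module.End.eigenspace (toLin' S) ρ, v ⬝ᵥ r 0 ≠ 0) :
    ∀ᶠ k : ℕ in atTop, ρ / (1 - ρ) ≤ Real.exp (1 / (k + 1)) *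
      (euclNorm (r (k + 1)) / euclNorm (r k) / (1 - euclNorm (r (k + 1)) / euclNorm (r k))) := by
  set b := hS.eigenvectorBasis
  set ε := hS.eigenvalues
  have hε : ∀ i, 0 ≤ ε i ∧ ε i ≤ ρ := fun i => hspec _ (hS.eigenvalues_mem_spectrum_real i)
  have hcoef : ∀ k i, ⇑(b i) ⬝ᵥ r k = ε i ^ k * (⇑(b i) ⬝ᵥ r 0) := by
    intro k i
    induction k with
    | zero => rw [pow_zero, one_mul]
    | succ k ih => rw [hr, hS.eigenvectorBasis_dotProduct_mulVec, ih, pow_succ]; ring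
  have hnorm : ∀ k, euclNorm (r k) ^ 2 = ∑ i, (ε i ^ k * (⇑(b i) ⬝ᵥ r 0)) ^ 2 := fun k => by
    rw [euclNorm, b.dotProduct_eq_sum]
    simp only [← sq, hcoef k]
    exact Real.sq_sqrt (Finset.sum_nonneg fun i _ => sq_nonneg _)
  obtain ⟨v, hv, hvr⟩ := hproj
  have hc := hS.exists_eigenvalues_eq_and_dotProduct_ne_zero hv hvr
  filter_upwards [eventually_mul_sum_sq_pow_le_sum_sq_pow_succ hρ0 hε hc
    (half_pos (sub_pos.mpr hρ))] with k hk
  rw [← hnorm, ← hnorm] at hk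
  have hx : 0 < euclNorm (r k) := by
    have h : 0 < ∑ i, (ε i ^ k * (⇑(b i) ⬝ᵥ r 0)) ^ 2 := sum_sq_pow_mul_pos hρ0 hc k
    rw [← hnorm k] at h
    exact (euclNorm_nonneg _).lt_of_ne' fun h0 => by simp [h0] at h
  set t := euclNorm (r (k + 1)) / euclNorm (r k)
  have ht0 : 0 ≤ t := div_nonneg (euclNorm_nonneg _) hx.le
  have htρ : t ≤ ρ := by
    rw [div_le_iff₀ hx]
    refine (pow_le_pow_iff_left₀ (euclNorm_nonneg _) (by positivity) two_ne_zero).mp ?_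
    rw [mul_pow, hnorm, hnorm]
    exact sum_sq_pow_succ_mul_le hε k
  have hlow : ρ ^ 2 * (1 - (1 - ρ) / 2 * (1 / (k + 1))) ≤ t ^ 2 := by
    rw [div_pow, le_div_iff₀ (pow_pos hx 2), mul_one_div]
    exact hk
  refine (div_one_sub_le_one_add_mul_div_one_sub ht0 htρ hρ (by positivity) ?_ hlow).trans ?_
  · rw [div_le_one (by positivity)]
    linarith [k.cast_nonneg (α := ℝ)]
  · rw [add_comm]
    exact mul_le_mul_of_nonneg_right (Real.add_one_le_exp _) (div_nonneg ht0 (by linarith))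

/-- Reliability of the algebraic error estimator: with `A` symmetric positive definite,
`B` symmetric, residual propagation matrix `S = I - A·B` symmetric with eigenvalues in
`(0,1)` and largest eigenvalue `ρ_err`, iteration `u^{(k+1)} = u^{(k)} + B(f - A u^{(k)})`,
residuals `r_k = f - A u^{(k)}` with the projection of `r₀` onto the `ρ_err`-eigenspace
nonzero, and `ρ_err^{(k)} = ‖r_k‖₂/‖r_{k-1}‖₂`, there exists `N` such that for all
`k ≥ N`, `‖u - u^{(k+1)}‖_A ≤ e^{1/k}·(ρ_err^{(k)}/(1-ρ_err^{(k)}))·‖u^{(k+1)}-u^{(k)}‖_A`. -/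
theorem algebraic_estimator_reliability {n : ℕ}
    (A B : Matrix (Fin n) (Fin n) ℝ)
    (hA : A.PosDef) (hB : B.IsSymm) (hS : (1 - A * B).IsSymm)
    (rho_err : ℝ)
    (hlam1 : Module.End.HasEigenvalue (Matrix.toLin' (1 - A * B)) rho_err)
    (hmax : ∀ μ : ℝ, Module.End.HasEigenvalue (Matrix.toLin' (1 - A * B)) μ → μ ≤ rho_err)
    (heig : ∀ μ : ℝ, Module.End.HasEigenvalue (Matrix.toLin' (1 - A * B)) μ → 0 < μ ∧ μ < 1)
    (hρ : rho_err < 1)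
    (f u : Fin n → ℝ) (hu : A.mulVec u = f)
    (uk : ℕ → Fin n → ℝ)
    (hiter : ∀ k : ℕ, uk (k + 1) = uk k + B.mulVec (f - A.mulVec (uk k)))
    (hproj : ∃ v : Fin n → ℝ,
      v ∈ Module.End.eigenspace (Matrix.toLin' (1 - A * B)) rho_err ∧
        v ⬝ᵥ (f - A.mulVec (uk 0)) ≠ 0) :
    ∃ N : ℕ, 1 ≤ N ∧ ∀ k : ℕ, N ≤ k →
      ANorm A (u - uk (k + 1)) ≤
        Real.exp (1 / (k : ℝ)) *
          ((euclNorm (f - A.mulVec (uk k)) / euclNorm (f - A.mulVec (uk (k - 1)))) /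
            (1 - euclNorm (f - A.mulVec (uk k)) / euclNorm (f - A.mulVec (uk (k - 1))))) *
          ANorm A (uk (k + 1) - uk k) := by
  set S := 1 - A * B
  have hρ0 : 0 < rho_err := (heig _ hlam1).1
  have hspec : ∀ μ ∈ spectrum ℝ S, 0 ≤ μ ∧ μ ≤ rho_err := fun μ hμ => by
    have hμ' : Module.End.HasEigenvalue (toLin' S) μ := by
      rwa [Module.End.hasEigenvalue_iff_mem_spectrum, spectrum_toLin']
    exact ⟨(heig μ hμ').1.le, hmax μ hμ'⟩
  obtain ⟨N, hN⟩ := eventually_atTop.mp <|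
    (isHermitian_iff_isSymm.mpr hS).eventually_div_one_sub_le_exp_mul_ratio hρ0 hρ hspec
      (r := fun k => f - A *ᵥ uk k) (residual_succ_eq hiter) hproj
  refine ⟨N + 1, N.succ_pos, fun k hk => ?_⟩
  obtain ⟨j, rfl⟩ : ∃ j, k = j + 1 := ⟨k - 1, by omega⟩
  rw [Nat.add_sub_cancel, Nat.cast_succ, error_succ_eq hu hiter]
  calc ANorm A ((1 - B * A) *ᵥ (u - uk (j + 1)))
      ≤ rho_err / (1 - rho_err) * ANorm A ((B * A) *ᵥ (u - uk (j + 1))) :=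
        ANorm_one_sub_mul_mulVec_le hA.posSemidef hB hρ0.le hρ hspec _
    _ ≤ _ := by
        rw [← increment_eq hu hiter]
        exact mul_le_mul_of_nonneg_right (hN j (by omega)) (Real.sqrt_nonneg _)
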